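/- Every persistence module of length n over a field k in which every vector space V_i is finite-dimensional is isomorphic (as a functor to k-vector spaces) to a finite direct sum of interval modules I[a,b] with 0 ≤ a ≤ b ≤ n. -/

import Mathlib

/-!
STATEMENT 0: Every persistence module of length `n` over a field `k` in which every
vector space `V i` is finite-dimensional is isomorphic (as a functor to `k`-vector
spaces, i.e. via a family of linear equivalences commuting with the structure maps)
to a finite direct sum of interval modules `I[a,b]` with `0 ≤ a ≤ b ≤ n`.
-/

open DirectSum

/-- The `i`-th space of the interval module `I[a,b]`, realized as a submodule of `k`:
it is all of `k` (i.e. `⊤`) for `a ≤ i ≤ b` and the zero submodule otherwise. -/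
def intervalSubmodule (k : Type*) [Field k] (a b i : ℕ) : Submodule k k :=
  if a ≤ i ∧ i ≤ b then ⊤ else ⊥

open Classical in
/-- The structure map of the interval module `I[a,b]` from index `i` to index `j`:
the (identity-like) inclusion whenever it exists, and zero otherwise.  For `j = i + 1`
this is the identity of `k` when `a ≤ i < b` (both spaces being `⊤`) and zero otherwise. -/
noncomputable def intervalStep (k : Type*) [Field k] (a b i j : ℕ) :
    intervalSubmodule k a b i →ₗ[k] intervalSubmodule k a b j :=
  if h : intervalSubmodule k a b i ≤ intervalSubmodule k a b j then Submodule.inclusion h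
  else 0

/-- The direct sum of a family of linear maps, as a map between direct sums. -/
noncomputable def dsumMap {k : Type*} [Field k] {ι : Type*} [DecidableEq ι]
    {M N : ι → Type*} [∀ x, AddCommGroup (M x)] [∀ x, Module k (M x)]
    [∀ x, AddCommGroup (N x)] [∀ x, Module k (N x)]
    (f : ∀ x, M x →ₗ[k] N x) : (⨁ x, M x) →ₗ[k] ⨁ x, N x :=
  DirectSum.toModule k ι _ fun x => (DirectSum.lof k ι N x).comp (f x)

/-!
Induct on `m`, keeping an interval basis of the truncation `V 0 → ⋯ → V m`: vectors living on bars
`[birth, death]` that form a basis at every level and are carried along their bars by the structure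
maps. To cross `φ m`, first make the nonzero images of the vectors alive at `m` linearly
independent: while they satisfy a relation, replace the youngest vector in it by the relation
itself. The other vectors in the relation are born no later and are alive at `m`, so the
replacement extends back along the whole bar (the elder rule). Then the vectors with nonzero image continue into `V (m + 1)`, the
others die at `m`, and a basis of a complement of the image starts new bars at `m + 1`. At `m = n`,
sending each live basis vector to the generator `1` of its interval summand is the isomorphism.
-/

open Module Submodule

section IntervalModule

variable {k : Type*} [Field k] {a b i : ℕ}

theorem intervalSubmodule_of_mem (h : a ≤ i ∧ i ≤ b) : intervalSubmodule k a b i = ⊤ :=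
  if_pos h

theorem intervalSubmodule_of_not_mem (h : ¬(a ≤ i ∧ i ≤ b)) : intervalSubmodule k a b i = ⊥ :=
  if_neg h

theorem one_mem_intervalSubmodule (h : a ≤ i ∧ i ≤ b) : (1 : k) ∈ intervalSubmodule k a b i := by
  simp [intervalSubmodule_of_mem h]

theorem eq_zero_of_not_mem_interval (h : ¬(a ≤ i ∧ i ≤ b)) (w : intervalSubmodule k a b i) :
    w = 0 :=
  Subtype.ext ((mem_bot k).1 (intervalSubmodule_of_not_mem (k := k) h ▸ w.2))

theorem coe_intervalStep {j : ℕ} (hi : a ≤ i ∧ i ≤ b) (hj : a ≤ j ∧ j ≤ b)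
    (w : intervalSubmodule k a b i) : (intervalStep k a b i j w : k) = w := by
  rw [intervalStep, dif_pos (by rw [intervalSubmodule_of_mem hi, intervalSubmodule_of_mem hj])]
  rfl

end IntervalModule

theorem dsumMap_lof {k : Type*} [Field k] {ι : Type*} [DecidableEq ι]
    {M N : ι → Type*} [∀ x, AddCommGroup (M x)] [∀ x, Module k (M x)]
    [∀ x, AddCommGroup (N x)] [∀ x, Module k (N x)]
    (f : ∀ x, M x →ₗ[k] N x) (x : ι) (w : M x) :
    dsumMap f (lof k ι M x w) = lof k ι N x (f x w) :=
  toModule_lof k x w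

theorem Nat.card_subtype_sum {α β : Type*} [Finite α] [Finite β] (p : α ⊕ β → Prop) :
    Nat.card {z // p z} = Nat.card {x // p (.inl x)} + Nat.card {y // p (.inr y)} := by
  rw [Nat.card_congr Equiv.subtypeSum, Nat.card_sum]

section Span

variable {k M ι : Type*}

theorem Submodule.span_range_subtype_of_eq_zero [Semiring k] [AddCommMonoid M] [Module k M]
    {p : ι → Prop} {v : ι → M} (hv : ∀ x, ¬p x → v x = 0) :
    span k (Set.range fun s : Subtype p => v s) = span k (Set.range v) := by
  refine le_antisymm (span_mono (Set.range_comp_subset_range _ _)) (span_le.2 ?_)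
  rintro _ ⟨x, rfl⟩
  by_cases hx : p x
  · exact subset_span ⟨⟨x, hx⟩, rfl⟩
  · simp [hv x hx]

theorem LinearIndepOn.natCard_eq_finrank_span [Field k] [AddCommGroup M] [Module k M] [Finite ι]
    {v : ι → M} (hv : LinearIndepOn k v {x | v x ≠ 0}) :
    Nat.card {x | v x ≠ 0} = finrank k (span k (Set.range v)) := by
  have := Fintype.ofFinite ι
  classical
  rw [← span_range_subtype_of_eq_zero (p := (· ∈ {x | v x ≠ 0})) fun x hx => not_not.1 hx,
    finrank_span_eq_card hv, Nat.card_eq_fintype_card]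

end Span

section IntervalBasis

variable {k : Type} [Field k] {n : ℕ} {V : Fin (n + 1) → Type}
  [∀ i, AddCommGroup (V i)] [∀ i, Module k (V i)]

/-- An interval basis of the truncation of `V` to the levels `i ≤ m`. Independence of the live
vectors is encoded by their number, which keeps it stable under the changes of basis below. -/
structure IntervalBasis (φ : ∀ i : Fin n, V i.castSucc →ₗ[k] V i.succ) (m : ℕ) where
  ι : Type
  [fintype : Fintype ι]
  birth : ι → ℕ
  death : ι → ℕ
  birth_le_death : ∀ x, birth x ≤ death x
  death_le : ∀ x, death x ≤ m
  vec : ∀ i : Fin (n + 1), ι → V i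
  vec_eq_zero : ∀ (i : Fin (n + 1)) x, ¬(birth x ≤ i ∧ (i : ℕ) ≤ death x) → vec i x = 0
  span_eq_top : ∀ i : Fin (n + 1), (i : ℕ) ≤ m → span k (Set.range (vec i)) = ⊤
  card_eq : ∀ i : Fin (n + 1), (i : ℕ) ≤ m →
    Nat.card {x // birth x ≤ i ∧ (i : ℕ) ≤ death x} = finrank k (V i)
  map_vec : ∀ i : Fin n, (i : ℕ) < m → ∀ x, birth x ≤ i → φ i (vec i.castSucc x) = vec i.succ x

namespace IntervalBasis

attribute [instance] fintype

variable {φ : ∀ i : Fin n, V i.castSucc →ₗ[k] V i.succ}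

noncomputable def ofLevelZero [FiniteDimensional k (V 0)] : IntervalBasis φ 0 where
  ι := Fin (finrank k (V 0))
  birth _ := 0
  death _ := 0
  birth_le_death _ := le_rfl
  death_le _ := le_rfl
  vec i x := Pi.single 0 (finBasis k (V 0) x) i
  vec_eq_zero i x hi := Pi.single_eq_of_ne (fun h => hi (by simp [h])) _
  span_eq_top i hi := by
    obtain rfl : i = 0 := Fin.ext (Nat.le_zero.1 hi)
    simp [(finBasis k (V 0)).span_eq]
  card_eq i hi := by
    obtain rfl : i = 0 := Fin.ext (Nat.le_zero.1 hi)
    simp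
  map_vec i hi := absurd hi (Nat.not_lt_zero _)

section Replace

variable {m : ℕ} (B : IntervalBasis φ m)

open Classical in
/-- Replacing `x₀` by `∑ y, c y • vec y` along its bar is a unitriangular change of basis at every
level, because all the `y` involved are alive wherever `x₀` is. -/
noncomputable def replace (x₀ : B.ι) (c : B.ι → k) (hc₀ : c x₀ = 1)
    (hc : ∀ y, c y ≠ 0 → B.birth y ≤ B.birth x₀ ∧ B.death y = m) : IntervalBasis φ m where
  ι := B.ι
  birth := B.birth
  death := B.death
  birth_le_death := B.birth_le_death
  death_le := B.death_le
  vec i x := if x = x₀ ∧ B.birth x₀ ≤ i then ∑ y, c y • B.vec i y else B.vec i x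
  vec_eq_zero i x hx := by
    by_cases h : x = x₀ ∧ B.birth x₀ ≤ i
    · obtain ⟨rfl, hb⟩ := h
      have hm : m < i := by
        have := (hc x (by simp [hc₀])).2
        omega
      rw [if_pos ⟨rfl, hb⟩]
      refine Finset.sum_eq_zero fun y _ => ?_
      rw [B.vec_eq_zero i y (by have := B.death_le y; omega), smul_zero]
    · rw [if_neg h]
      exact B.vec_eq_zero i x hx
  span_eq_top i hi := by
    set w : B.ι → V i := fun x =>
      if x = x₀ ∧ B.birth x₀ ≤ i then ∑ y, c y • B.vec i y else B.vec i x
    refine eq_top_iff.2 (B.span_eq_top i hi ▸ span_le.2 ?_)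
    rintro _ ⟨y, rfl⟩
    by_cases h : y = x₀ ∧ B.birth x₀ ≤ i
    · obtain ⟨rfl, hb⟩ := h
      have hw : ∑ z ∈ Finset.univ.erase y, c z • w z =
          ∑ z ∈ Finset.univ.erase y, c z • B.vec i z :=
        Finset.sum_congr rfl fun z hz => by
          simp only [w, if_neg fun h : z = y ∧ _ => Finset.ne_of_mem_erase hz h.1]
      have hy : B.vec i y = w y - ∑ z ∈ Finset.univ.erase y, c z • w z := by
        simp only [hw, w, if_pos (And.intro rfl hb)]
        rw [← Finset.add_sum_erase _ _ (Finset.mem_univ y), hc₀, one_smul,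
          add_sub_cancel_right]
      rw [hy]
      exact sub_mem (subset_span ⟨y, rfl⟩)
        (sum_mem fun z _ => smul_mem _ _ (subset_span ⟨z, rfl⟩))
    · exact subset_span ⟨y, if_neg h⟩
  card_eq := B.card_eq
  map_vec i hi x hx := by
    by_cases hx₀ : x = x₀
    · subst hx₀
      simp only [Fin.val_castSucc, Fin.val_succ, true_and, if_pos hx,
        if_pos (hx.trans i.val.le_succ), map_sum, map_smul]
      refine Finset.sum_congr rfl fun y _ => ?_
      by_cases hy : c y = 0
      · rw [hy, zero_smul, zero_smul]
      · rw [B.map_vec i hi y ((hc y hy).1.trans hx)]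
    · simp only [hx₀, false_and, if_false]
      exact B.map_vec i hi x hx

def image (j : Fin n) (x : B.ι) : V j.succ :=
  φ j (B.vec j.castSucc x)

def survivors (j : Fin n) : Set B.ι :=
  {x | B.image j x ≠ 0}

theorem image_replace_self {x₀ : B.ι} {c : B.ι → k} {hc₀ : c x₀ = 1}
    {hc : ∀ y, c y ≠ 0 → B.birth y ≤ B.birth x₀ ∧ B.death y = m} {j : Fin n}
    (hj : B.birth x₀ ≤ j) :
    (B.replace x₀ c hc₀ hc).image j x₀ = ∑ y, c y • B.image j y := by
  simp [image, replace, hj, map_sum]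

theorem image_replace_of_ne {x₀ : B.ι} {c : B.ι → k} {hc₀ : c x₀ = 1}
    {hc : ∀ y, c y ≠ 0 → B.birth y ≤ B.birth x₀ ∧ B.death y = m} (j : Fin n) {x : B.ι}
    (hx : x ≠ x₀) : (B.replace x₀ c hc₀ hc).image j x = B.image j x := by
  simp [image, replace, hx]

end Replace

section ElderRule

variable {j : Fin n}

theorem birth_le_and_death_eq_of_mem_survivors (B : IntervalBasis φ j) {x : B.ι}
    (hx : x ∈ B.survivors j) : B.birth x ≤ j ∧ B.death x = j := by
  have hvec : B.vec j.castSucc x ≠ 0 := fun h => hx (by rw [image, h, map_zero])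
  have halive := not_not.1 (mt (B.vec_eq_zero j.castSucc x) hvec)
  rw [Fin.val_castSucc] at halive
  exact ⟨halive.1, le_antisymm (B.death_le x) halive.2⟩

theorem exists_ncard_survivors_lt (B : IntervalBasis φ j)
    (h : ¬LinearIndepOn k (B.image j) (B.survivors j)) :
    ∃ B' : IntervalBasis φ j, (B'.survivors j).ncard < (B.survivors j).ncard := by
  obtain ⟨l, hl_supp, hl_zero, hl⟩ : ∃ l ∈ Finsupp.supported k k (B.survivors j),
      Finsupp.linearCombination k (B.image j) l = 0 ∧ l ≠ 0 := by
    simpa [linearIndepOn_iff] using h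
  rw [Finsupp.linearCombination_apply, Finsupp.sum_fintype _ _ (by simp)] at hl_zero
  obtain ⟨x₀, hx₀, hmax⟩ :=
    l.support.exists_max_image B.birth (Finsupp.support_nonempty_iff.2 hl)
  have hl₀ : l x₀ ≠ 0 := Finsupp.mem_support_iff.1 hx₀
  set c : B.ι → k := fun y => (l x₀)⁻¹ * l y
  have hc : ∀ y, c y ≠ 0 → B.birth y ≤ B.birth x₀ ∧ B.death y = j := fun y hy => by
    have hy : y ∈ l.support := Finsupp.mem_support_iff.2 (right_ne_zero_of_mul hy)
    exact ⟨hmax y hy, (B.birth_le_and_death_eq_of_mem_survivors (hl_supp hy)).2⟩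
  have hbirth : B.birth x₀ ≤ j := (B.birth_le_and_death_eq_of_mem_survivors (hl_supp hx₀)).1
  refine ⟨B.replace x₀ c (inv_mul_cancel₀ hl₀) hc, ?_⟩
  have hsub : (B.replace x₀ c (inv_mul_cancel₀ hl₀) hc).survivors j ⊆ B.survivors j \ {x₀} := by
    intro x hx
    by_cases h : x = x₀
    · refine absurd ?_ hx
      rw [h, image_replace_self B hbirth]
      simp only [c, mul_smul, ← Finset.smul_sum, hl_zero, smul_zero]
    · exact ⟨fun h0 => hx ((image_replace_of_ne B j h).trans h0), h⟩
  exact (Set.ncard_le_ncard hsub (Set.toFinite _)).trans_lt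
    (Set.ncard_sdiff_singleton_lt_of_mem (hl_supp hx₀) (Set.toFinite _))

theorem exists_linearIndepOn_image (B : IntervalBasis φ j) :
    ∃ B' : IntervalBasis φ j, LinearIndepOn k (B'.image j) (B'.survivors j) := by
  induction hN : (B.survivors j).ncard using Nat.strong_induction_on generalizing B with
  | _ N ih =>
    by_cases h : LinearIndepOn k (B.image j) (B.survivors j)
    · exact ⟨B, h⟩
    · obtain ⟨B', hB'⟩ := B.exists_ncard_survivors_lt h
      exact ih _ (hN ▸ hB') B' rfl

end ElderRule

open Classical in
noncomputable def extend {j : Fin n} [FiniteDimensional k (V j.succ)] (B : IntervalBasis φ j)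
    (hB : LinearIndepOn k (B.image j) (B.survivors j)) {C : Submodule k (V j.succ)}
    (hC : IsCompl (span k (Set.range (B.image j))) C) {τ : Type} [Fintype τ] (c : Basis τ k C) :
    IntervalBasis φ (j + 1) where
  ι := B.ι ⊕ τ
  birth := Sum.elim B.birth fun _ => j + 1
  death := Sum.elim (fun x => if x ∈ B.survivors j then j + 1 else B.death x) fun _ => j + 1
  birth_le_death := by
    rintro (x | t)
    · dsimp only [Sum.elim_inl]
      split_ifs with h
      · exact (B.birth_le_and_death_eq_of_mem_survivors h).1.trans (Nat.le_succ _)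
      · exact B.birth_le_death x
    · exact le_rfl
  death_le := by
    rintro (x | t)
    · dsimp only [Sum.elim_inl]
      split_ifs
      · exact le_rfl
      · exact (B.death_le x).trans (Nat.le_succ _)
    · exact le_rfl
  vec i := Sum.elim (fun x => if (i : ℕ) ≤ j then B.vec i x else Pi.single j.succ (B.image j x) i)
    fun t => Pi.single j.succ (c t : V j.succ) i
  vec_eq_zero i z hz := by
    rcases z with x | t
    · dsimp only [Sum.elim_inl] at hz ⊢
      split_ifs with hi
      · refine B.vec_eq_zero i x fun h => hz ⟨h.1, h.2.trans ?_⟩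
        have := B.death_le x
        split_ifs <;> omega
      · by_cases hij : i = j.succ
        · subst hij
          rw [Pi.single_eq_same]
          by_contra h
          have := (B.birth_le_and_death_eq_of_mem_survivors h).1
          exact hz ⟨by simp; omega, by simp [survivors, h]⟩
        · exact Pi.single_eq_of_ne hij _
    · dsimp only [Sum.elim_inr] at hz ⊢
      exact Pi.single_eq_of_ne (fun h => hz (by simp [h])) _
  span_eq_top i hi := by
    rcases hi.lt_or_eq with hij | hij
    · have hij : (i : ℕ) ≤ j := Nat.lt_succ_iff.1 hij
      refine eq_top_iff.2 (B.span_eq_top i hij ▸ span_le.2 ?_)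
      rintro _ ⟨x, rfl⟩
      exact subset_span ⟨.inl x, if_pos hij⟩
    · obtain rfl : i = j.succ := Fin.ext hij
      have hC_span : span k (Set.range fun t => (c t : V j.succ)) = C := by
        rw [show (fun t => (c t : V j.succ)) = C.subtype ∘ c from rfl, Set.range_comp,
          span_image, c.span_eq, Submodule.map_top, range_subtype]
      rw [eq_top_iff, ← hC.sup_eq_top]
      refine sup_le (span_le.2 ?_) (hC_span.ge.trans (span_mono ?_))
      · rintro _ ⟨x, rfl⟩
        exact subset_span ⟨.inl x, by simp⟩
      · rintro _ ⟨t, rfl⟩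
        exact ⟨.inr t, by simp⟩
  card_eq i hi := by
    rw [Nat.card_subtype_sum]
    rcases hi.lt_or_eq with hij | hij
    · have hij : (i : ℕ) ≤ j := Nat.lt_succ_iff.1 hij
      have : IsEmpty {t : τ // j + 1 ≤ (i : ℕ) ∧ (i : ℕ) ≤ j + 1} := ⟨fun t => by omega⟩
      simp only [Sum.elim_inl, Sum.elim_inr, Nat.card_of_isEmpty, add_zero, ← B.card_eq i hij]
      refine Nat.card_congr <| Equiv.subtypeEquivRight fun x => ?_
      split_ifs with h
      · have := (B.birth_le_and_death_eq_of_mem_survivors h).2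
        omega
      · rfl
    · obtain rfl : i = j.succ := Fin.ext hij
      simp only [Sum.elim_inl, Sum.elim_inr, Fin.val_succ, le_refl, and_self]
      have hsurvive : Nat.card {x // B.birth x ≤ j + 1 ∧
          j + 1 ≤ if x ∈ B.survivors j then (j : ℕ) + 1 else B.death x} =
          Nat.card (B.survivors j) := by
        refine Nat.card_congr <| Equiv.subtypeEquivRight fun x => ?_
        have := B.death_le x
        split_ifs with h
        · simpa [h] using (B.birth_le_and_death_eq_of_mem_survivors h).1.trans (Nat.le_succ _)
        · exact iff_of_false (by omega) h
      rw [hsurvive, survivors, hB.natCard_eq_finrank_span,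
        Nat.card_congr (Equiv.subtypeUnivEquiv fun _ => trivial), Nat.card_eq_fintype_card,
        ← finrank_eq_card_basis c, finrank_add_eq_of_isCompl hC]
  map_vec i hi z hz := by
    rcases z with x | t
    · dsimp only [Sum.elim_inl] at hz ⊢
      rw [if_pos (by simp; omega : ((i.castSucc : Fin (n + 1)) : ℕ) ≤ j)]
      rcases (Nat.lt_succ_iff.1 hi).lt_or_eq with hij | hij
      · rw [if_pos (by simp; omega)]
        exact B.map_vec i hij x hz
      · obtain rfl : i = j := Fin.ext hij
        rw [if_neg (by simp), Pi.single_eq_same]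
        rfl
    · dsimp only [Sum.elim_inr] at hz
      omega

theorem nonempty [∀ i, FiniteDimensional k (V i)] : ∀ m ≤ n, Nonempty (IntervalBasis φ m)
  | 0, _ => ⟨ofLevelZero⟩
  | m + 1, hm => by
    obtain ⟨B⟩ := nonempty m (Nat.le_of_succ_le hm)
    obtain ⟨B', hB'⟩ := exists_linearIndepOn_image (j := ⟨m, hm⟩) B
    obtain ⟨C, hC⟩ := Submodule.exists_isCompl (span k (Set.range (B'.image ⟨m, hm⟩)))
    exact ⟨B'.extend hB' hC (finBasis k C)⟩

section DirectSum

variable {m : ℕ} (B : IntervalBasis φ m)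

noncomputable def basis (i : Fin (n + 1)) (hi : (i : ℕ) ≤ m) :
    Basis {x // B.birth x ≤ i ∧ (i : ℕ) ≤ B.death x} k (V i) :=
  basisOfTopLeSpanOfCardEqFinrank (fun s => B.vec i s)
    (by rw [span_range_subtype_of_eq_zero (B.vec_eq_zero i), B.span_eq_top i hi])
    (by rw [← Nat.card_eq_fintype_card, B.card_eq i hi])

@[simp]
theorem basis_apply (i : Fin (n + 1)) (hi : (i : ℕ) ≤ m) (s) : B.basis i hi s = B.vec i s :=
  congrFun (coe_basisOfTopLeSpanOfCardEqFinrank _ _ _) s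

variable [DecidableEq B.ι]

noncomputable def toDirectSum (i : Fin (n + 1)) (hi : (i : ℕ) ≤ m) :
    V i →ₗ[k] ⨁ x, intervalSubmodule k (B.birth x) (B.death x) i :=
  (B.basis i hi).constr k fun s => lof k B.ι _ s.1 ⟨1, one_mem_intervalSubmodule s.2⟩

noncomputable def ofDirectSum (i : Fin (n + 1)) :
    (⨁ x, intervalSubmodule k (B.birth x) (B.death x) i) →ₗ[k] V i :=
  toModule k B.ι (V i) fun x =>
    (LinearMap.toSpanSingleton k (V i) (B.vec i x)).comp (Submodule.subtype _)

theorem toDirectSum_vec {i : Fin (n + 1)} (hi : (i : ℕ) ≤ m) {x : B.ι}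
    (hx : B.birth x ≤ i ∧ (i : ℕ) ≤ B.death x) :
    B.toDirectSum i hi (B.vec i x) = lof k B.ι _ x ⟨1, one_mem_intervalSubmodule hx⟩ := by
  rw [toDirectSum, ← B.basis_apply i hi ⟨x, hx⟩, Basis.constr_basis]

theorem ofDirectSum_lof {i : Fin (n + 1)} (x : B.ι)
    (w : intervalSubmodule k (B.birth x) (B.death x) i) :
    B.ofDirectSum i (lof k B.ι _ x w) = (w : k) • B.vec i x := by
  rw [ofDirectSum, toModule_lof]
  rfl

noncomputable def equivDirectSum (i : Fin (n + 1)) (hi : (i : ℕ) ≤ m) :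
    V i ≃ₗ[k] ⨁ x, intervalSubmodule k (B.birth x) (B.death x) i :=
  LinearEquiv.ofLinearMap (B.toDirectSum i hi) (B.ofDirectSum i)
    (linearMap_ext k fun x => LinearMap.ext fun w => by
      rw [LinearMap.comp_apply, LinearMap.comp_apply, LinearMap.comp_apply, ofDirectSum_lof,
        LinearMap.id_apply]
      by_cases hx : B.birth x ≤ i ∧ (i : ℕ) ≤ B.death x
      · rw [map_smul, B.toDirectSum_vec hi hx, ← map_smul]
        exact congrArg _ (Subtype.ext (by simp))
      · rw [eq_zero_of_not_mem_interval hx w, ZeroMemClass.coe_zero, zero_smul, map_zero,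
          map_zero])
    ((B.basis i hi).ext fun s => by simp [B.toDirectSum_vec hi s.2, ofDirectSum_lof])

theorem equivDirectSum_map (i : Fin n) (hi : (i : ℕ) < m) (v : V i.castSucc) :
    B.equivDirectSum i.succ hi (φ i v) =
      dsumMap (fun x => intervalStep k (B.birth x) (B.death x) i (i + 1))
        (B.equivDirectSum i.castSucc hi.le v) := by
  suffices h : B.toDirectSum i.succ hi ∘ₗ φ i = dsumMap (fun x => intervalStep k (B.birth x)
      (B.death x) i (i + 1)) ∘ₗ B.toDirectSum i.castSucc hi.le from LinearMap.congr_fun h v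
  refine (B.basis i.castSucc hi.le).ext fun ⟨x, hx⟩ => ?_
  replace hx : B.birth x ≤ (i : ℕ) ∧ (i : ℕ) ≤ B.death x := hx
  rw [LinearMap.comp_apply, LinearMap.comp_apply, basis_apply, B.map_vec i hi x hx.1,
    B.toDirectSum_vec (i := i.castSucc) hi.le hx]
  erw [dsumMap_lof]
  by_cases h : B.birth x ≤ (i : ℕ) + 1 ∧ (i : ℕ) + 1 ≤ B.death x
  · rw [B.toDirectSum_vec (i := i.succ) hi h]
    exact congrArg _ (Subtype.ext (coe_intervalStep (k := k) hx h ⟨1, _⟩).symm)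
  · rw [B.vec_eq_zero _ x h, map_zero, eq_zero_of_not_mem_interval h (intervalStep _ _ _ _ _ _),
      map_zero]

end DirectSum

end IntervalBasis

end IntervalBasis

/-- **Interval decomposition of pointwise finite-dimensional persistence modules.**
A persistence module of length `n` over a field `k` is given by vector spaces
`V 0, …, V n` and linear maps `φ i : V i → V (i+1)`.  If all the `V i` are
finite-dimensional, then `V` is isomorphic, as a persistence module, to a finite
direct sum of interval modules `I[a x, b x]` with `a x ≤ b x ≤ n`: there is a family
of linear equivalences `e i` commuting with the structure maps on both sides. -/
theorem persistence_module_interval_decomposition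
    (k : Type) [Field k] (n : ℕ)
    (V : Fin (n + 1) → Type) [∀ i, AddCommGroup (V i)] [∀ i, Module k (V i)]
    [∀ i, FiniteDimensional k (V i)]
    (φ : ∀ i : Fin n, V i.castSucc →ₗ[k] V i.succ) :
    ∃ (ι : Type) (_ : Fintype ι) (_ : DecidableEq ι) (a b : ι → ℕ),
      (∀ x, a x ≤ b x) ∧ (∀ x, b x ≤ n) ∧
      ∃ e : ∀ i : Fin (n + 1),
          V i ≃ₗ[k] ⨁ x : ι, intervalSubmodule k (a x) (b x) (i : ℕ),
        ∀ (i : Fin n) (v : V i.castSucc),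
          e i.succ (φ i v) =
            dsumMap (fun x => intervalStep k (a x) (b x) (i : ℕ) ((i : ℕ) + 1))
              (e i.castSucc v) := by
  classical
  obtain ⟨B⟩ : Nonempty (IntervalBasis φ n) := IntervalBasis.nonempty n le_rfl
  exact ⟨B.ι, inferInstance, inferInstance, B.birth, B.death, B.birth_le_death, B.death_le,
    fun i => B.equivDirectSum i (Nat.lt_succ_iff.1 i.isLt), fun i => B.equivDirectSum_map i i.isLt⟩
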